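/- arXiv:1106.5600 — 5 statements merged into one kernel-verified Lean document; each statement's English description precedes it below -/
import Mathlib

section
/- If real numbers θ₁, …, θ_k together with 1 are linearly independent over ℚ, then the set of points ((n·θ₁ mod 1), …, (n·θ_k mod 1)) for n ∈ ℕ is dense in the unit cube [0,1]^k. -/
/-!
Write `𝐞 t = exp (2πit)` and `cosBump t = (1 + cos 2πt) / 2 = cos² πt`. The kernel
`P(s) = ∏ᵢ cosBump (sᵢ) ^ p` is a trigonometric polynomial on the torus whose constant term is
`(C(2p, p) / 4 ^ p) ^ k ≥ (2p + 1) ^ (-k)`. Every other frequency `m ∈ ℤᵏ` contributes a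
character `n ↦ 𝐞 (n ⟨m, θ⟩)` with `⟨m, θ⟩ ∉ ℤ` by the independence of `1, θ₁, …, θₖ`, whose
Cesàro means tend to `0`. Hence the Cesàro means of `n ↦ P(nθ - y)` tend to the constant term.
Choosing `p` with `(2p + 1) ^ k (1 - δ) ^ p < 1`, some `n` has `P(nθ - y) > (1 - δ) ^ p`, so
every factor exceeds `1 - δ` and every `nθᵢ - yᵢ` is within `√δ / 2` of an integer. Moving the
target slightly into the interior of the cube turns this into closeness of fractional parts.
-/

open Finset Filter Real Topology FourierTransform

lemma fourierChar_eq_one_iff {t : ℝ} : 𝐞 t = 1 ↔ ∃ n : ℤ, t = n := by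
  rw [fourierChar_apply', Circle.exp_eq_one]
  refine exists_congr fun n => ?_
  constructor <;> intro h
  · nlinarith [pi_pos]
  · rw [h]; ring

lemma fourierChar_sum {ι : Type*} (s : Finset ι) (f : ι → ℝ) :
    𝐞 (∑ i ∈ s, f i) = ∏ i ∈ s, 𝐞 (f i) := by
  induction s using Finset.cons_induction with
  | empty => simp
  | cons a s ha ih => rw [sum_cons, prod_cons, AddChar.map_add_eq_mul, ih]

lemma fourierChar_sum_intCast_mul {ι : Type*} [Fintype ι] (m : ι → ℤ) (θ : ι → ℝ) :
    𝐞 (∑ i, m i * θ i) = ∏ i, 𝐞 (θ i) ^ m i := by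
  simp_rw [fourierChar_sum, ← zsmul_eq_mul, AddChar.map_zsmul_eq_zpow]

lemma fourierChar_natCast_mul_sub_zpow (n : ℕ) (a b : ℝ) (m : ℤ) :
    𝐞 (n * a - b) ^ m = (𝐞 b)⁻¹ ^ m * (𝐞 a ^ m) ^ n := by
  rw [AddChar.map_sub_eq_div, ← nsmul_eq_mul, AddChar.map_nsmul_eq_pow, div_eq_mul_inv,
    mul_zpow, mul_comm, ← zpow_natCast, ← zpow_mul, ← zpow_natCast, ← zpow_mul, mul_comm m]

@[simp, norm_cast]
lemma Circle.coe_prod {ι : Type*} (s : Finset ι) (f : ι → Circle) :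
    ((∏ i ∈ s, f i : Circle) : ℂ) = ∏ i ∈ s, (f i : ℂ) :=
  map_prod Circle.coeHom f s

lemma tendsto_cesaro_pow_of_ne_one {z : Circle} (hz : z ≠ 1) :
    Tendsto (fun N : ℕ => (N : ℝ)⁻¹ • ∑ n ∈ range N, (z : ℂ) ^ n) atTop (𝓝 0) := by
  have hz' : (z : ℂ) ≠ 1 := Circle.coe_eq_one.not.mpr hz
  have hbound : ∀ N : ℕ, ‖∑ n ∈ range N, (z : ℂ) ^ n‖ ≤ 2 / ‖(z : ℂ) - 1‖ := fun N => by
    rw [geom_sum_eq hz', norm_div]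
    gcongr
    calc ‖(z : ℂ) ^ N - 1‖ ≤ ‖(z : ℂ) ^ N‖ + ‖(1 : ℂ)‖ := norm_sub_le _ _
      _ = 2 := by rw [norm_pow, Circle.norm_coe]; norm_num
  refine squeeze_zero_norm (fun N => ?_)
    (by simpa using tendsto_inv_atTop_nhds_zero_nat.mul_const (2 / ‖(z : ℂ) - 1‖))
  rw [norm_smul, norm_inv, Real.norm_natCast]
  gcongr
  exact hbound N

open scoped Classical in
lemma tendsto_cesaro_pow (z : Circle) :
    Tendsto (fun N : ℕ => (N : ℝ)⁻¹ • ∑ n ∈ range N, (z : ℂ) ^ n) atTop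
      (𝓝 (if z = 1 then 1 else 0)) := by
  split_ifs with hz
  · simpa [hz] using (tendsto_const_nhds (x := (1 : ℂ))).cesaro_smul
  · exact tendsto_cesaro_pow_of_ne_one hz

open scoped Classical in
lemma tendsto_cesaro_sum_mul_pow {ι : Type*} (F : Finset ι) (c : ι → ℂ) (z : ι → Circle) :
    Tendsto (fun N : ℕ => (N : ℝ)⁻¹ • ∑ n ∈ range N, ∑ J ∈ F, c J * (z J : ℂ) ^ n) atTop
      (𝓝 (∑ J ∈ F with z J = 1, c J)) := by
  have hmean : ∀ N : ℕ, (N : ℝ)⁻¹ • ∑ n ∈ range N, ∑ J ∈ F, c J * (z J : ℂ) ^ n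
      = ∑ J ∈ F, c J * ((N : ℝ)⁻¹ • ∑ n ∈ range N, (z J : ℂ) ^ n) := fun N => by
    simp_rw [sum_comm (s := range N), smul_sum, mul_sum, mul_smul_comm]
  rw [sum_filter]
  simp_rw [hmean]
  refine tendsto_finsetSum F fun J _ => ?_
  simpa [apply_ite] using (tendsto_cesaro_pow (z J)).const_mul (c J)

noncomputable def cosBump (t : ℝ) : ℝ := (1 + cos (2 * π * t)) / 2

lemma cosBump_nonneg (t : ℝ) : 0 ≤ cosBump t := by
  unfold cosBump; linarith [neg_one_le_cos (2 * π * t)]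

lemma cosBump_le_one (t : ℝ) : cosBump t ≤ 1 := by
  unfold cosBump; linarith [cos_le_one (2 * π * t)]

lemma cosBump_sub_intCast (t : ℝ) (n : ℤ) : cosBump (t - n) = cosBump t := by
  rw [cosBump, cosBump, mul_sub, mul_comm _ (n : ℝ), cos_sub_int_mul_two_pi]

lemma cosBump_le_one_sub_sq {d : ℝ} (hd : |d| ≤ 1 / 2) : cosBump d ≤ 1 - 4 * d ^ 2 := by
  have hx : |2 * π * d| ≤ π := by
    rw [abs_mul, abs_of_pos two_pi_pos]; nlinarith [pi_pos]
  have := cos_le_one_sub_mul_cos_sq hx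
  rw [cosBump]
  field_simp at this ⊢
  nlinarith [pi_pos]

lemma abs_sub_round_lt_of_one_sub_lt_cosBump {s η : ℝ} (hη : 0 ≤ η)
    (h : 1 - 4 * η ^ 2 < cosBump s) : |s - round s| < η := by
  have hle := cosBump_le_one_sub_sq (abs_sub_round s)
  rw [cosBump_sub_intCast] at hle
  exact abs_lt_of_sq_lt_sq (by linarith) hη

lemma ofReal_cosBump (t : ℝ) :
    (cosBump t : ℂ) = ((𝐞 t : ℂ) + 1) ^ 2 / (4 * 𝐞 t) := by
  have h := Complex.two_cos (↑(2 * π * t))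
  rw [cosBump, fourierChar_apply]
  push_cast at h ⊢
  rw [neg_mul, Complex.exp_neg] at h
  have hne : Complex.exp (2 * π * t * Complex.I) ≠ 0 := Complex.exp_ne_zero _
  field_simp
  linear_combination (2 * Complex.exp (2 * π * t * Complex.I)) * h + 2 * mul_inv_cancel₀ hne

lemma cosBump_pow_eq_sum (t : ℝ) (p : ℕ) :
    (cosBump t ^ p : ℂ) = ∑ j ∈ range (2 * p + 1),
      ((2 * p).choose j / 4 ^ p : ℂ) * ((𝐞 t ^ ((j : ℤ) - p) : Circle) : ℂ) := by
  have hw : (𝐞 t : ℂ) ≠ 0 := Circle.coe_ne_zero _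
  rw [ofReal_cosBump, div_pow, ← pow_mul, add_pow, sum_div]
  refine sum_congr rfl fun j _ => ?_
  rw [Circle.coe_zpow, zpow_sub₀ hw, zpow_natCast, zpow_natCast, mul_pow, one_pow, mul_one]
  field_simp

lemma prod_cosBump_pow_eq_sum {ι : Type*} [Fintype ι] [DecidableEq ι] (s : ι → ℝ) (p : ℕ) :
    ((∏ i, cosBump (s i) ^ p : ℝ) : ℂ) = ∑ J ∈ Fintype.piFinset fun _ => range (2 * p + 1),
      (∏ i, ((2 * p).choose (J i) / 4 ^ p : ℂ)) *
        ((∏ i, 𝐞 (s i) ^ ((J i : ℤ) - p) : Circle) : ℂ) := by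
  rw [Complex.ofReal_prod]
  simp_rw [Complex.ofReal_pow, cosBump_pow_eq_sum, prod_univ_sum, prod_mul_distrib]
  push_cast
  rfl

theorem tendsto_cesaro_prod_cosBump_pow {ι : Type*} [Fintype ι] {θ : ι → ℝ}
    (hθ : ∀ m : ι → ℤ, m ≠ 0 → 𝐞 (∑ i, m i * θ i) ≠ 1) (y : ι → ℝ) (p : ℕ) :
    Tendsto (fun N : ℕ => (N : ℝ)⁻¹ * ∑ n ∈ range N, ∏ i, cosBump (n * θ i - y i) ^ p) atTop
      (𝓝 (((2 * p).choose p / 4 ^ p) ^ Fintype.card ι)) := by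
  classical
  set F := Fintype.piFinset fun _ : ι => range (2 * p + 1)
  set c : (ι → ℕ) → ℂ := fun J => (∏ i, ((2 * p).choose (J i) / 4 ^ p : ℂ)) *
    ((∏ i, (𝐞 (y i))⁻¹ ^ ((J i : ℤ) - p) : Circle) : ℂ)
  set z : (ι → ℕ) → Circle := fun J => ∏ i, 𝐞 (θ i) ^ ((J i : ℤ) - p)
  have hexpand (n : ℕ) : ((∏ i, cosBump (n * θ i - y i) ^ p : ℝ) : ℂ) =
      ∑ J ∈ F, c J * (z J : ℂ) ^ n := by
    rw [prod_cosBump_pow_eq_sum]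
    refine sum_congr rfl fun J _ => ?_
    simp_rw [c, z, mul_assoc, ← Circle.coe_pow, ← Circle.coe_mul, ← prod_pow, ← prod_mul_distrib,
      fourierChar_natCast_mul_sub_zpow]
  have hresonant : {J ∈ F | z J = 1} = {fun _ => p} := by
    ext J
    simp only [mem_filter, mem_singleton, F, Fintype.mem_piFinset, mem_range, z]
    constructor
    · rintro ⟨-, hJ⟩
      by_contra hne
      refine hθ (fun i => (J i : ℤ) - p) (fun h0 => hne (funext fun i => ?_)) ?_
      · simpa [sub_eq_zero] using congrFun h0 i
      · rwa [fourierChar_sum_intCast_mul]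
    · rintro rfl
      exact ⟨fun _ => by dsimp only; omega, by simp⟩
  rw [← tendsto_ofReal_iff]
  convert tendsto_cesaro_sum_mul_pow F c z using 2 with N
  · rw [Complex.real_smul, Complex.ofReal_mul, Complex.ofReal_sum,
      sum_congr rfl fun n _ => hexpand n]
  · simp [hresonant, c, div_pow]

lemma exists_two_mul_add_one_pow_mul_pow_lt_one (k : ℕ) {r : ℝ} (hr₀ : 0 ≤ r) (hr₁ : r < 1) :
    ∃ p : ℕ, (2 * p + 1 : ℝ) ^ k * r ^ p < 1 := by
  have hlim := (tendsto_pow_const_mul_const_pow_of_abs_lt_one k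
    (abs_lt.2 ⟨by linarith, hr₁⟩)).const_mul ((3 : ℝ) ^ k)
  rw [mul_zero] at hlim
  obtain ⟨p, hp, hp₁⟩ := ((hlim.eventually (gt_mem_nhds one_pos)).and
    (eventually_ge_atTop 1)).exists
  refine ⟨p, lt_of_le_of_lt ?_ hp⟩
  have : (2 * p + 1 : ℝ) ≤ 3 * p := by
    have : (1 : ℝ) ≤ p := by exact_mod_cast hp₁
    linarith
  calc (2 * p + 1 : ℝ) ^ k * r ^ p ≤ (3 * p) ^ k * r ^ p := by gcongr
    _ = 3 ^ k * (p ^ k * r ^ p) := by ring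

lemma inv_two_mul_add_one_le_choose_div_four_pow (p : ℕ) :
    (2 * p + 1 : ℝ)⁻¹ ≤ (2 * p).choose p / 4 ^ p := by
  rw [inv_le_iff_one_le_mul₀ (by positivity), div_mul_eq_mul_div, le_div_iff₀ (by positivity),
    one_mul, mul_comm]
  exact_mod_cast Nat.four_pow_le_two_mul_add_one_mul_central_binom p

theorem exists_nat_forall_one_sub_lt_cosBump {ι : Type*} [Fintype ι] {θ : ι → ℝ}
    (hθ : ∀ m : ι → ℤ, m ≠ 0 → 𝐞 (∑ i, m i * θ i) ≠ 1) (y : ι → ℝ) {δ : ℝ}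
    (hδ₀ : 0 < δ) (hδ₁ : δ ≤ 1) :
    ∃ n : ℕ, ∀ i, 1 - δ < cosBump (n * θ i - y i) := by
  obtain ⟨p, hp⟩ := exists_two_mul_add_one_pow_mul_pow_lt_one (Fintype.card ι)
    (sub_nonneg.2 hδ₁) (by linarith)
  have hlim : (1 - δ) ^ p < ((2 * p).choose p / 4 ^ p) ^ Fintype.card ι :=
    calc (1 - δ) ^ p < ((2 * p + 1 : ℝ) ^ Fintype.card ι)⁻¹ := by
          rwa [← one_div, lt_div_iff₀ (by positivity), mul_comm]
      _ = (2 * p + 1 : ℝ)⁻¹ ^ Fintype.card ι := (inv_pow _ _).symm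
      _ ≤ _ := by gcongr; exact inv_two_mul_add_one_le_choose_div_four_pow p
  obtain ⟨N, hN, hN₀⟩ := (((tendsto_cesaro_prod_cosBump_pow hθ y p).eventually
    (lt_mem_nhds hlim)).and (eventually_gt_atTop 0)).exists
  obtain ⟨n, -, hn⟩ : ∃ n ∈ range N, (1 - δ) ^ p < ∏ i, cosBump (n * θ i - y i) ^ p := by
    refine exists_lt_of_sum_lt ?_
    rw [sum_const, card_range, nsmul_eq_mul]
    rwa [lt_inv_mul_iff₀ (by positivity)] at hN
  refine ⟨n, fun i => lt_of_pow_lt_pow_left₀ p (cosBump_nonneg _) (hn.trans_le ?_)⟩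
  simpa using prod_le_prod_of_subset_of_le_one (subset_univ {i})
    (fun j _ => pow_nonneg (cosBump_nonneg _) p) fun j _ _ => pow_le_one₀ (cosBump_nonneg _)
      (cosBump_le_one _)

lemma fourierChar_sum_ne_one_of_linearIndependent {k : ℕ} {θ : Fin k → ℝ}
    (h : LinearIndependent ℚ (Fin.cons 1 θ : Fin (k + 1) → ℝ)) {m : Fin k → ℤ} (hm : m ≠ 0) :
    𝐞 (∑ i, m i * θ i) ≠ 1 := by
  rw [Ne, fourierChar_eq_one_iff]
  rintro ⟨r, hr⟩
  have hcoeff := Fintype.linearIndependent_iff.mp h (Fin.cons (-r) fun i => (m i : ℚ)) (by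
    simp only [Fin.sum_univ_succ, Fin.cons_zero, Fin.cons_succ, Rat.smul_def]
    push_cast
    rw [← hr]
    ring)
  exact hm (funext fun i => by simpa using hcoeff i.succ)

lemma exists_mem_Icc_abs_sub_le {x η : ℝ} (hx : x ∈ Set.Icc (0 : ℝ) 1) (hη₀ : 0 ≤ η)
    (hη₁ : η ≤ 1 / 2) : ∃ y ∈ Set.Icc η (1 - η), |y - x| ≤ η := by
  obtain ⟨hx₀, hx₁⟩ := hx
  refine ⟨max η (min x (1 - η)), ⟨le_max_left _ _, max_le (by linarith) (min_le_right _ _)⟩,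
    abs_sub_le_iff.2 ⟨?_, ?_⟩⟩
  · exact sub_le_iff_le_add.2 (max_le (by linarith) ((min_le_left _ _).trans (by linarith)))
  · linarith [le_max_right η (min x (1 - η)), le_min (show x - η ≤ x by linarith)
      (show x - η ≤ 1 - η by linarith)]

lemma abs_fract_sub_lt {t y η : ℝ} (hy : y ∈ Set.Icc η (1 - η))
    (h : |t - y - round (t - y)| < η) : |Int.fract t - y| < η := by
  obtain ⟨h₁, h₂⟩ := abs_lt.1 h
  have hfract : Int.fract t = t - round (t - y) := by
    rw [← Int.fract_sub_intCast t (round (t - y)), Int.fract_eq_self]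
    constructor <;> linarith [hy.1, hy.2]
  rw [hfract]
  exact abs_lt.2 ⟨by linarith, by linarith⟩

/-- Kronecker's density theorem: if `θ 1, …, θ k` together with `1` are linearly
independent over `ℚ`, then the points `(fract (n θ 1), …, fract (n θ k))`, `n ∈ ℕ`,
are dense in the unit cube `[0,1]^k`. -/
theorem kronecker_dense {k : ℕ} (θ : Fin k → ℝ)
    (h : LinearIndependent ℚ (Fin.cons 1 θ : Fin (k + 1) → ℝ)) :
    ∀ x : Fin k → ℝ, (∀ i, x i ∈ Set.Icc (0 : ℝ) 1) →
      ∀ ε > 0, ∃ n : ℕ, ∀ i, |Int.fract ((n : ℝ) * θ i) - x i| < ε := by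
  intro x hx ε hε
  obtain ⟨η, hη₀, hη₁, hηε⟩ : ∃ η : ℝ, 0 < η ∧ η ≤ 1 / 4 ∧ η ≤ ε / 2 :=
    ⟨min (ε / 2) (1 / 4), lt_min (by linarith) (by norm_num), min_le_right _ _, min_le_left _ _⟩
  choose y hyI hyx using fun i => exists_mem_Icc_abs_sub_le (hx i) hη₀.le (hη₁.trans (by norm_num))
  obtain ⟨n, hn⟩ := exists_nat_forall_one_sub_lt_cosBump
    (fun m hm => fourierChar_sum_ne_one_of_linearIndependent h hm) y
    (δ := 4 * η ^ 2) (by positivity) (by nlinarith)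
  refine ⟨n, fun i => ?_⟩
  have hclose := abs_fract_sub_lt (hyI i) (abs_sub_round_lt_of_one_sub_lt_cosBump hη₀.le (hn i))
  calc |Int.fract ((n : ℝ) * θ i) - x i|
      ≤ |Int.fract ((n : ℝ) * θ i) - y i| + |y i - x i| := abs_sub_le _ _ _
    _ < η + η := add_lt_add_of_lt_of_le hclose (hyx i)
    _ ≤ ε := by linarith
end

section
/- Let a₀,…,a_{n-1}, b₀,…,b_{n-1} be real numbers algebraically independent over ℚ, let ℓ_{i,j} = √(1 + a_i²)·((b_i − b_j)/(a_j − a_i) − (b_{i-1} − b_i)/(a_i − a_{i-1})) for pairs (i,j) in a set I of pairs with j ≠ i−1 (indices mod n). Then the family {ℓ_{i,j} : (i,j) ∈ I} together with 1 is linearly independent over ℚ. -/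
/-!
Put `u_k = a_k + √(1 + a_k²)`, so that `a_k = (u_k - u_k⁻¹) / 2` and
`√(1 + a_k²) = (u_k + u_k⁻¹) / 2`. The family `(u, b)` is again algebraically independent, and
in these coordinates the relation `λ + ∑ c_{i,j} ℓ_{i,j} = 0` is a rational identity with
rational coefficients, so it persists at every other algebraically independent point. The
substitution `u_i ↦ -u_i⁻¹` fixes every `a_k` and flips the sign of `√(1 + a_i²)` only;
subtracting the two relations leaves, for each `i`, the identity
`∑_j c_{i,j} (x(P_{i,j}) - x(P_i)) = 0` in `(a, b)`. It is linear in `b`, and shifting `b_m` by `1`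
(again an algebraically independent point) extracts its `b_m`-coefficient. For `m = j` that
coefficient is a nonzero multiple of `c_{i,j}` (`j ≠ i`), for `m = i - 1` of `∑_j c_{i,j}`, so
all `c_{i,j}` vanish, and then so does `λ`.
-/

open Set

universe u

/-- Both values are images of the same element of the rational function field under injective
field maps. -/
theorem AlgebraicIndependent.natural_eq_zero_iff {k ι E E' : Type u} [CommRing k] [IsDomain k]
    [Field E] [Field E'] [Algebra k E] [Algebra k E'] {x : ι → E} {y : ι → E'}
    (hx : AlgebraicIndependent k x) (hy : AlgebraicIndependent k y)
    (f : ∀ {F : Type u} [Field F] [Algebra k F], (ι → F) → F)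
    (hf : ∀ {F F' : Type u} [Field F] [Field F'] [Algebra k F] [Algebra k F'] (φ : F →ₐ[k] F')
      (v : ι → F), φ (f v) = f (φ ∘ v)) :
    f x = 0 ↔ f y = 0 := by
  let X : ι → FractionRing (MvPolynomial ι k) :=
    fun i ↦ algebraMap (MvPolynomial ι k) _ (MvPolynomial.X i)
  have lift_comp_X {E : Type u} [Field E] [Algebra k E] {z : ι → E}
      (hz : AlgebraicIndependent k z) :
      IsFractionRing.liftAlgHom (algebraicIndependent_iff_injective_aeval.1 hz) ∘ X = z := by
    ext i
    simp [X]
  rw [← lift_comp_X hx, ← lift_comp_X hy, ← hf, ← hf, map_eq_zero, map_eq_zero]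

/-- In the algebraic matroid, `range y` spans the independent set `range x` of size `#ι`, so it
has rank at least `#ι` but at most `#ι` elements. -/
theorem AlgebraicIndependent.of_isAlgebraic_adjoin_range {R A ι : Type*} [CommRing R]
    [CommRing A] [IsDomain A] [Algebra R A] [FaithfulSMul R A] [Finite ι] {x y : ι → A}
    (hx : AlgebraicIndependent R x)
    (hxy : ∀ i, IsAlgebraic (Algebra.adjoin R (range y)) (x i)) :
    AlgebraicIndependent R y := by
  have := Module.nontrivial R A
  let M := AlgebraicIndependent.matroid R A
  have hspan : range x ⊆ M.closure (range y) := by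
    rw [AlgebraicIndependent.matroid_closure_eq]
    rintro _ ⟨i, rfl⟩
    exact hxy i
  have hxM : M.Indep (range x) := hx.to_subtype_range
  have hrk : (range x).encard ≤ M.eRk (range y) :=
    M.eRk_closure_eq (range y) ▸ hxM.encard_le_eRk_of_subset hspan
  have hcard : (range y).encard ≤ (range x).encard := by
    simp only [encard, ENat.card_eq_coe_natCard, Nat.card_range_of_injective hx.injective]
    exact_mod_cast Nat.card_le_card_of_surjective _ rangeFactorization_surjective
  have hyM : M.Indep (range y) :=
    (M.indep_iff_eRk_eq_encard_of_finite (finite_range y)).2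
      (le_antisymm (M.eRk_le_encard _) (hcard.trans hrk))
  have hinj : Function.Injective y := by
    have := hrk.trans (M.eRk_le_encard _)
    simp only [encard, ENat.card_eq_coe_natCard, Nat.card_range_of_injective hx.injective] at this
    exact fun i j hij ↦ (rangeFactorization_surjective.bijective_of_nat_card_le
      (by exact_mod_cast this)).1 (Subtype.ext hij)
  exact (algebraicIndependent_subtype_range hinj).1 hyM

theorem AlgebraicIndependent.add_algebraMap {R A ι : Type*} [CommRing R] [CommRing A]
    [IsDomain A] [Algebra R A] [FaithfulSMul R A] [Finite ι] {x : ι → A}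
    (hx : AlgebraicIndependent R x) (c : ι → R) :
    AlgebraicIndependent R fun i ↦ x i + algebraMap R A (c i) := by
  refine hx.of_isAlgebraic_adjoin_range fun i ↦ ?_
  have hmem : x i ∈ Algebra.adjoin R (range fun i ↦ x i + algebraMap R A (c i)) := by
    rw [← add_sub_cancel_right (x i) (algebraMap R A (c i))]
    exact sub_mem (Algebra.subset_adjoin ⟨i, rfl⟩) (Subalgebra.algebraMap_mem _ _)
  exact isAlgebraic_algebraMap (⟨x i, hmem⟩ : Algebra.adjoin R _)

theorem Fin.sub_one_ne_self_of_ne_sub_one {n : ℕ} [NeZero n] {i j : Fin n} (h : j ≠ i - 1) :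
    i - 1 ≠ i := by
  intro hi
  have h1 : 1 % n = 0 := by rw [← Fin.val_one', sub_eq_self.mp hi, Fin.val_zero]
  have : Subsingleton (Fin n) :=
    Fin.subsingleton_iff_le_one.mpr (Nat.le_of_dvd Nat.one_pos (Nat.dvd_of_mod_eq_zero h1))
  exact h (Subsingleton.elim _ _)

section HalfInv

variable {F : Type*} [Field F]

def halfSubInv (u : F) : F := (u - u⁻¹) / 2

def halfAddInv (u : F) : F := (u + u⁻¹) / 2

theorem halfSubInv_neg_inv (u : F) : halfSubInv (-u⁻¹) = halfSubInv u := by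
  rw [halfSubInv, halfSubInv, inv_neg, inv_inv]
  ring

theorem halfAddInv_neg_inv (u : F) : halfAddInv (-u⁻¹) = -halfAddInv u := by
  rw [halfAddInv, halfAddInv, inv_neg, inv_inv]
  ring

theorem halfSubInv_comp_update_neg_inv {ι : Type*} [DecidableEq ι] (u : ι → F) (i : ι) :
    halfSubInv ∘ Function.update u i (-(u i)⁻¹) = halfSubInv ∘ u := by
  ext k
  rcases eq_or_ne k i with rfl | hk
  · simp [halfSubInv_neg_inv]
  · simp [hk]

theorem AlgebraicIndependent.sumElim_of_halfSubInv {R ι ι' : Type*} [CommRing R] [CharZero F]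
    [Algebra R F] [FaithfulSMul R F] [Finite ι] [Finite ι'] {a u : ι → F} {b : ι' → F}
    (hab : AlgebraicIndependent R (Sum.elim a b)) (hu : ∀ k, u k ≠ 0)
    (hua : halfSubInv ∘ u = a) :
    AlgebraicIndependent R (Sum.elim u b) := by
  refine hab.of_isAlgebraic_adjoin_range ?_
  let S := Algebra.adjoin R (range (Sum.elim u b))
  have mem : ∀ k, u k ∈ S := fun k ↦ Algebra.subset_adjoin ⟨Sum.inl k, rfl⟩
  rintro (k | k)
  · have hsmul : (⟨2 * u k, mul_mem (ofNat_mem S 2) (mem k)⟩ : S) • a k =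
        algebraMap S F ⟨u k ^ 2 - 1, sub_mem (pow_mem (mem k) 2) (one_mem S)⟩ := by
      change 2 * u k * a k = u k ^ 2 - 1
      rw [← hua, Function.comp_apply, halfSubInv]
      field_simp [hu k]
    refine IsAlgebraic.of_smul (mem_nonZeroDivisors_of_ne_zero fun h ↦ hu k ?_)
      (hsmul ▸ isAlgebraic_algebraMap _)
    simpa using congrArg Subtype.val h
  · exact isAlgebraic_algebraMap (⟨b k, Algebra.subset_adjoin ⟨Sum.inr k, rfl⟩⟩ : S)

end HalfInv

theorem inv_add_sqrt_one_add_sq (x : ℝ) : (x + √(1 + x ^ 2))⁻¹ = √(1 + x ^ 2) - x := by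
  refine inv_eq_of_mul_eq_one_right ?_
  linear_combination Real.sq_sqrt (by positivity : (0 : ℝ) ≤ 1 + x ^ 2)

theorem add_sqrt_one_add_sq_pos (x : ℝ) : 0 < x + √(1 + x ^ 2) := by
  have := Real.sq_sqrt (by positivity : (0 : ℝ) ≤ 1 + x ^ 2)
  nlinarith [Real.sqrt_nonneg (1 + x ^ 2)]

theorem halfSubInv_add_sqrt_one_add_sq (x : ℝ) : halfSubInv (x + √(1 + x ^ 2)) = x := by
  rw [halfSubInv, inv_add_sqrt_one_add_sq]
  ring

theorem halfAddInv_add_sqrt_one_add_sq (x : ℝ) :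
    halfAddInv (x + √(1 + x ^ 2)) = √(1 + x ^ 2) := by
  rw [halfAddInv, inv_add_sqrt_one_add_sq]
  ring

namespace LineArrangement

section Field

variable {F : Type*} [Field F] {n : ℕ}

/-- The abscissa of the crossing point `P_{i,j}` of the lines `y = a_i x + b_i` and
`y = a_j x + b_j`. -/
def crossingX (a b : Fin n → F) (i j : Fin n) : F := (b i - b j) / (a j - a i)

theorem crossingX_add (a b b' : Fin n → F) (i j : Fin n) :
    crossingX a (b + b') i j = crossingX a b i j + crossingX a b' i j := by
  simp only [crossingX, Pi.add_apply]
  ring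

variable [NeZero n]

/-- `ℓ_{i,j} / √(1 + a_i²)`: the vertex `P_i` is the crossing point `P_{i-1,i}`. -/
def displacement (a b : Fin n → F) (i j : Fin n) : F :=
  crossingX a b i j - crossingX a b (i - 1) i

variable [Algebra ℚ F] (I : Finset (Fin n × Fin n)) (lam : ℚ) (c : Fin n × Fin n → ℚ)

def rowCombination (i : Fin n) (a b : Fin n → F) : F :=
  ∑ p ∈ I with p.1 = i, algebraMap ℚ F (c p) * displacement a b p.1 p.2

/-- `λ + ∑ c_{i,j} ℓ_{i,j}` in the coordinates `(u, b)`. -/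
def lengthCombination (u b : Fin n → F) : F :=
  algebraMap ℚ F lam + ∑ p ∈ I,
    algebraMap ℚ F (c p) * (halfAddInv (u p.1) * displacement (halfSubInv ∘ u) b p.1 p.2)

theorem map_rowCombination {F' : Type*} [Field F'] [Algebra ℚ F'] (φ : F →ₐ[ℚ] F')
    (i : Fin n) (a b : Fin n → F) :
    φ (rowCombination I c i a b) = rowCombination I c i (φ ∘ a) (φ ∘ b) := by
  simp [rowCombination, displacement, crossingX]

theorem map_lengthCombination {F' : Type*} [Field F'] [Algebra ℚ F'] (φ : F →ₐ[ℚ] F')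
    (u b : Fin n → F) :
    φ (lengthCombination I lam c u b) = lengthCombination I lam c (φ ∘ u) (φ ∘ b) := by
  simp [lengthCombination, displacement, crossingX, halfAddInv, halfSubInv, Function.comp_def,
    map_ofNat]

theorem rowCombination_add (i : Fin n) (a b b' : Fin n → F) :
    rowCombination I c i a (b + b') = rowCombination I c i a b + rowCombination I c i a b' := by
  simp only [rowCombination, displacement, crossingX_add, ← Finset.sum_add_distrib]
  exact Finset.sum_congr rfl fun _ _ ↦ by ring

theorem lengthCombination_sub_update_neg_inv (u b : Fin n → F) (i : Fin n) :
    lengthCombination I lam c u b - lengthCombination I lam c (Function.update u i (-(u i)⁻¹)) b =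
      2 * halfAddInv (u i) * rowCombination I c i (halfSubInv ∘ u) b := by
  rw [lengthCombination, lengthCombination, halfSubInv_comp_update_neg_inv,
    add_sub_add_left_eq_sub, ← Finset.sum_sub_distrib, rowCombination, Finset.sum_filter,
    Finset.mul_sum]
  refine Finset.sum_congr rfl fun p _ ↦ ?_
  rcases eq_or_ne p.1 i with hp | hp
  · simp only [hp, Function.update_self, halfAddInv_neg_inv, if_true]
    ring
  · simp [hp]

variable {I c}

theorem rowCombination_single_of_mem (a : Fin n → F) (hI : ∀ p ∈ I, p.2 ≠ p.1 - 1)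
    {i j : Fin n} (hij : (i, j) ∈ I) (hji : j ≠ i) :
    rowCombination I c i a (Pi.single j 1) = -algebraMap ℚ F (c (i, j)) / (a j - a i) := by
  rw [rowCombination, Finset.sum_eq_single_of_mem (i, j) (by simp [hij])]
  · simp [displacement, crossingX, hji.symm, hI _ hij]
    ring
  · rintro ⟨i', j'⟩ hp hne
    obtain ⟨-, rfl : i' = i⟩ := Finset.mem_filter.mp hp
    have hj' : j' ≠ j := fun h ↦ hne (by rw [h])
    simp [displacement, crossingX, hji.symm, Ne.symm (hI _ hij), hj']

theorem rowCombination_single_sub_one (a : Fin n → F) (hI : ∀ p ∈ I, p.2 ≠ p.1 - 1)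
    (i : Fin n) :
    rowCombination I c i a (Pi.single (i - 1) 1) =
      -(∑ p ∈ I with p.1 = i, algebraMap ℚ F (c p)) / (a i - a (i - 1)) := by
  rw [rowCombination, ← Finset.sum_neg_distrib, Finset.sum_div]
  refine Finset.sum_congr rfl fun p hp ↦ ?_
  obtain ⟨hpI, rfl⟩ := Finset.mem_filter.mp hp
  have := Fin.sub_one_ne_self_of_ne_sub_one (hI p hpI)
  simp [displacement, crossingX, this, Ne.symm (hI p hpI)]
  ring

theorem eq_zero_of_rowCombination_single {a : Fin n → F} (ha : Function.Injective a)
    (hI : ∀ p ∈ I, p.2 ≠ p.1 - 1) (h : ∀ i m, rowCombination I c i a (Pi.single m 1) = 0) :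
    ∀ p ∈ I, c p = 0 := by
  have off_diag : ∀ p ∈ I, p.2 ≠ p.1 → c p = 0 := by
    rintro ⟨i, j⟩ hp hji
    have := h i j
    rw [rowCombination_single_of_mem a hI hp hji, div_eq_zero_iff, neg_eq_zero,
      map_eq_zero] at this
    exact this.resolve_right (sub_ne_zero.mpr (ha.ne hji))
  rintro ⟨i, j⟩ hp
  rcases eq_or_ne j i with rfl | hji
  · have := h j (j - 1)
    rw [rowCombination_single_sub_one a hI, div_eq_zero_iff, neg_eq_zero,
      Finset.sum_eq_single_of_mem (j, j) (by simp [hp]), map_eq_zero] at this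
    · exact this.resolve_right
        (sub_ne_zero.mpr (ha.ne (Fin.sub_one_ne_self_of_ne_sub_one (hI _ hp)).symm))
    · rintro ⟨i', j'⟩ hq hne
      obtain ⟨hqI, rfl : i' = j⟩ := Finset.mem_filter.mp hq
      rw [off_diag _ hqI (fun h ↦ hne (by simp_all)), map_zero]
  · exact off_diag _ hp hji

end Field

section CharZero

variable {F : Type} [Field F] [CharZero F] {n : ℕ} [NeZero n] {I : Finset (Fin n × Fin n)}
  {lam : ℚ} {c : Fin n × Fin n → ℚ} {a b u : Fin n → F}

theorem rowCombination_eq_zero_of_lengthCombination_eq_zero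
    (hab : AlgebraicIndependent ℚ (Sum.elim a b)) (hu : ∀ k, u k ≠ 0) (hua : halfSubInv ∘ u = a)
    (hs : ∀ k, halfAddInv (u k) ≠ 0) (h : lengthCombination I lam c u b = 0) (i : Fin n) :
    rowCombination I c i a b = 0 := by
  set u' := Function.update u i (-(u i)⁻¹)
  have hu' : ∀ k, u' k ≠ 0 := fun k ↦ by
    rcases eq_or_ne k i with rfl | hk
    · simpa [u'] using hu k
    · simpa [u', hk] using hu k
  have hconj := ((hab.sumElim_of_halfSubInv hu hua).natural_eq_zero_iff
    (hab.sumElim_of_halfSubInv hu' ((halfSubInv_comp_update_neg_inv u i).trans hua))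
    (fun v ↦ lengthCombination I lam c (v ∘ Sum.inl) (v ∘ Sum.inr))
    (fun φ v ↦ map_lengthCombination I lam c φ _ _)).1 h
  rw [Sum.elim_comp_inl, Sum.elim_comp_inr] at hconj
  have := lengthCombination_sub_update_neg_inv I lam c u b i
  rw [h, hconj, sub_zero, hua] at this
  exact (mul_eq_zero.mp this.symm).resolve_left (mul_ne_zero two_ne_zero (hs i))

theorem rowCombination_single_eq_zero (hab : AlgebraicIndependent ℚ (Sum.elim a b)) {i : Fin n}
    (h : rowCombination I c i a b = 0) (m : Fin n) :
    rowCombination I c i a (Pi.single m 1) = 0 := by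
  have hshift : AlgebraicIndependent ℚ (Sum.elim a (b + Pi.single m 1)) := by
    convert hab.add_algebraMap (Sum.elim 0 (Pi.single m 1)) using 1
    ext (k | k) <;> simp [Pi.single_apply]
  have := (hab.natural_eq_zero_iff hshift
    (fun v ↦ rowCombination I c i (v ∘ Sum.inl) (v ∘ Sum.inr))
    (fun φ v ↦ map_rowCombination I c φ i _ _)).1 h
  rwa [Sum.elim_comp_inl, Sum.elim_comp_inr, rowCombination_add, h, zero_add] at this

end CharZero

end LineArrangement

/-- If `a₀,…,a_{n-1}, b₀,…,b_{n-1}` are algebraically independent over `ℚ`, the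
lengths `ℓ_{i,j} = √(1+a_i²)((b_i-b_j)/(a_j-a_i) - (b_{i-1}-b_i)/(a_i-a_{i-1}))`,
for `(i,j)` in a set of pairs with `j ≠ i - 1` (indices mod `n`), together with `1`,
are linearly independent over `ℚ`. -/
theorem lengths_linearIndependent {n : ℕ} [NeZero n] (a b : Fin n → ℝ)
    (hab : AlgebraicIndependent ℚ (Sum.elim a b))
    (I : Finset (Fin n × Fin n)) (hI : ∀ p ∈ I, p.2 ≠ p.1 - 1)
    (ℓ : Fin n → Fin n → ℝ)
    (hℓ : ∀ i j, ℓ i j = Real.sqrt (1 + a i ^ 2) *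
      ((b i - b j) / (a j - a i) - (b (i - 1) - b i) / (a i - a (i - 1))))
    (lam : ℚ) (c : Fin n × Fin n → ℚ)
    (hrel : (lam : ℝ) + ∑ p ∈ I, (c p : ℝ) * ℓ p.1 p.2 = 0) :
    (∀ p ∈ I, c p = 0) ∧ lam = 0 := by
  set u : Fin n → ℝ := fun k ↦ a k + √(1 + a k ^ 2)
  have hua : halfSubInv ∘ u = a := funext fun k ↦ halfSubInv_add_sqrt_one_add_sq (a k)
  have hus : ∀ k, halfAddInv (u k) = √(1 + a k ^ 2) :=
    fun k ↦ halfAddInv_add_sqrt_one_add_sq (a k)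
  have hcomb : LineArrangement.lengthCombination I lam c u b = 0 := by
    rw [← hrel, LineArrangement.lengthCombination, hua]
    simp [hℓ, hus, LineArrangement.displacement, LineArrangement.crossingX]
  have hrow := LineArrangement.rowCombination_eq_zero_of_lengthCombination_eq_zero hab
    (fun k ↦ (add_sqrt_one_add_sq_pos (a k)).ne') hua (fun k ↦ by rw [hus]; positivity) hcomb
  have hc : ∀ p ∈ I, c p = 0 :=
    LineArrangement.eq_zero_of_rowCombination_single (hab.injective.comp Sum.inl_injective) hI
      fun i ↦ LineArrangement.rowCombination_single_eq_zero hab (hrow i)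
  have hsum : ∑ p ∈ I, (c p : ℝ) * ℓ p.1 p.2 = 0 :=
    Finset.sum_eq_zero fun p hp ↦ by rw [hc p hp, Rat.cast_zero, zero_mul]
  rw [hsum, add_zero] at hrel
  exact ⟨hc, by exact_mod_cast hrel⟩
end

section
/- If t₁, …, t_k are real numbers in (0,1) such that 1, t₁, …, t_k are linearly independent over ℚ, then for any prescribed target heights h₁,…,h_k ∈ (0,1) and any ε > 0, there exist an integer n ≥ 1 and φ ∈ ℝ such that |z(t_i) − h_i| < ε for all i, where z(t) = 2·|frac(n·t + φ) − 1/2| and frac denotes fractional part. -/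
open Submodule Filter Topology

namespace HeightsApprox

variable {k : ℕ}

/-- The subgroup `ℤ·t + ℤ^k` of `ℝ^k`. -/
def S (t : Fin k → ℝ) : AddSubgroup (Fin k → ℝ) where
  carrier := {x | ∃ (n : ℤ) (m : Fin k → ℤ), x = fun i => n * t i + m i}
  zero_mem' := ⟨0, 0, by funext i; simp⟩
  add_mem' := by
    rintro x y ⟨n, m, rfl⟩ ⟨n', m', rfl⟩
    exact ⟨n + n', m + m', by funext i; simp only [Pi.add_apply]; push_cast; ring⟩
  neg_mem' := by
    rintro x ⟨n, m, rfl⟩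
    exact ⟨-n, -m, by funext i; simp only [Pi.neg_apply]; push_cast; ring⟩

theorem mem_S {t : Fin k → ℝ} {x : Fin k → ℝ} :
    x ∈ S t ↔ ∃ (n : ℤ) (m : Fin k → ℤ), x = fun i => n * t i + m i := Iff.rfl

set_option maxHeartbeats 1000000 in
theorem kron_dense (t : Fin k → ℝ)
    (hli : LinearIndependent ℚ (Fin.cons 1 t : Fin (k + 1) → ℝ)) :
    Dense ((S t : Set (Fin k → ℝ))) := by
  classical
  set G : AddSubgroup (Fin k → ℝ) := (S t).topologicalClosure with hG
  have hGc : IsClosed (G : Set (Fin k → ℝ)) := (S t).isClosed_topologicalClosure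
  have hSG : ∀ x ∈ S t, x ∈ G := fun x hx => (S t).le_topologicalClosure hx
  -- the maximal subspace contained in G
  set V : Submodule ℝ (Fin k → ℝ) :=
    { carrier := {x | ∀ c : ℝ, c • x ∈ G}
      zero_mem' := fun c => by simpa using G.zero_mem
      add_mem' := fun {x y} hx hy c => by
        simpa [smul_add] using G.add_mem (hx c) (hy c)
      smul_mem' := fun c x hx c' => by
        simpa [smul_smul] using hx (c' * c) } with hVdef
  have hVmem : ∀ {x : Fin k → ℝ}, x ∈ V ↔ ∀ c : ℝ, c • x ∈ G := Iff.rfl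
  have hVG : ∀ x ∈ V, x ∈ G := fun x hx => by simpa using (hVmem.1 hx) 1
  -- main claim : V = ⊤
  have hVtop : V = ⊤ := by
    by_contra hV
    obtain ⟨U, hUV⟩ := V.exists_isCompl
    have hUV' : IsCompl U V := hUV.symm
    set p : (Fin k → ℝ) →ₗ[ℝ] ↥U := U.projectionOnto V hUV' with hp
    have hker : ∀ y : Fin k → ℝ, p y = 0 → y ∈ V := by
      intro y hy
      have : y ∈ LinearMap.ker p := LinearMap.mem_ker.2 hy
      rwa [hp, Submodule.linearProjOfIsCompl_ker] at this
    have hpG : ∀ x ∈ G, ((p x : ↥U) : Fin k → ℝ) ∈ G := by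
      intro x hx
      have h1 : x - ((p x : ↥U) : Fin k → ℝ) ∈ V := by
        apply hker
        rw [map_sub, hp, Submodule.linearProjOfIsCompl_apply_left, sub_self]
      have := G.sub_mem hx (hVG _ h1)
      simpa using this
    -- the "lattice" part of G
    set L : Submodule ℤ ↥U :=
      { carrier := {u | (u : Fin k → ℝ) ∈ G}
        zero_mem' := by simpa using G.zero_mem
        add_mem' := fun {x y} hx hy => by simpa using G.add_mem hx hy
        smul_mem' := fun n u hu => by
          have hcoe : ((n • u : ↥U) : Fin k → ℝ) = n • (u : Fin k → ℝ) :=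
            map_zsmul (U.subtype.toAddMonoidHom) n u
          show ((n • u : ↥U) : Fin k → ℝ) ∈ G
          rw [hcoe]
          exact G.zsmul_mem hu n } with hLdef
    have hLmem : ∀ {u : ↥U}, u ∈ L ↔ (u : Fin k → ℝ) ∈ G := Iff.rfl
    -- discreteness of L
    have hsep : ∃ ε > (0:ℝ), ∀ u : ↥U, u ∈ L → ‖u‖ < ε → u = 0 := by
      by_contra hcon
      push_neg at hcon
      have hpick : ∀ n : ℕ, ∃ u : ↥U, u ∈ L ∧ ‖u‖ < ((n : ℝ) + 1)⁻¹ ∧ u ≠ 0 := by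
        intro n
        obtain ⟨u, hu1, hu2, hu3⟩ := hcon (((n : ℝ) + 1)⁻¹) (by positivity)
        exact ⟨u, hu1, hu2, hu3⟩
      choose u huL hun hu0 using hpick
      have hnorm_pos : ∀ n, (0:ℝ) < ‖u n‖ := fun n => norm_pos_iff.2 (hu0 n)
      set w : ℕ → ↥U := fun n => ‖u n‖⁻¹ • u n with hw
      have hwsph : ∀ n, w n ∈ Metric.sphere (0 : ↥U) 1 := by
        intro n
        simp only [mem_sphere_iff_norm, sub_zero, hw]
        rw [norm_smul (‖u n‖⁻¹) (u n), norm_inv, norm_norm, inv_mul_cancel₀ (hnorm_pos n).ne']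
      obtain ⟨w₀, hw₀, φ, hφ, hlim⟩ :=
        (isCompact_sphere (0 : ↥U) 1).tendsto_subseq hwsph
      have hw₀1 : ‖w₀‖ = 1 := by simpa using hw₀
      have hu_tendsto : Tendsto (fun j => ‖u (φ j)‖) atTop (𝓝 0) := by
        apply squeeze_zero (fun j => (norm_nonneg _)) (fun j => (hun (φ j)).le)
        have h1 : Tendsto (fun n : ℕ => ((n : ℝ) + 1)⁻¹) atTop (𝓝 0) :=
          tendsto_one_div_add_atTop_nhds_zero_nat.congr (by intro n; rw [one_div])
        exact h1.comp hφ.tendsto_atTop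
      have hw₀V : (w₀ : Fin k → ℝ) ∈ V := by
        intro c
        have hterm : ∀ j : ℕ, ((⌊c / ‖u (φ j)‖⌋ • u (φ j) : ↥U) : Fin k → ℝ) ∈ G := by
          intro j
          have hcoe : ((⌊c / ‖u (φ j)‖⌋ • u (φ j) : ↥U) : Fin k → ℝ)
              = ⌊c / ‖u (φ j)‖⌋ • ((u (φ j) : ↥U) : Fin k → ℝ) :=
            map_zsmul (U.subtype.toAddMonoidHom) _ _
          rw [hcoe]
          exact G.zsmul_mem (huL (φ j)) _
        have heq : ∀ j : ℕ, ((⌊c / ‖u (φ j)‖⌋ • u (φ j) : ↥U) : Fin k → ℝ)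
            = ((⌊c / ‖u (φ j)‖⌋ : ℝ) * ‖u (φ j)‖) • ((w (φ j) : ↥U) : Fin k → ℝ) := by
          intro j
          have h1 : (⌊c / ‖u (φ j)‖⌋ • u (φ j) : ↥U)
              = ((⌊c / ‖u (φ j)‖⌋ : ℝ) * ‖u (φ j)‖) • w (φ j) := by
            rw [hw]
            simp only []
            rw [smul_smul, mul_assoc, mul_inv_cancel₀ (hnorm_pos (φ j)).ne', mul_one,
              Int.cast_smul_eq_zsmul]
          rw [h1, Submodule.coe_smul]
        have hcoef : Tendsto (fun j => (⌊c / ‖u (φ j)‖⌋ : ℝ) * ‖u (φ j)‖) atTop (𝓝 c) := by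
          have hdist : ∀ j, |(⌊c / ‖u (φ j)‖⌋ : ℝ) * ‖u (φ j)‖ - c| ≤ ‖u (φ j)‖ := by
            intro j
            have h0 := hnorm_pos (φ j)
            have h1 : (⌊c / ‖u (φ j)‖⌋ : ℝ) * ‖u (φ j)‖ ≤ c :=
              (le_div_iff₀ h0).1 (Int.floor_le _)
            have h2 : c < ((⌊c / ‖u (φ j)‖⌋ : ℝ) + 1) * ‖u (φ j)‖ :=
              (div_lt_iff₀ h0).1 (Int.lt_floor_add_one _)
            rw [abs_le]
            constructor <;> nlinarith
          have h3 : Tendsto (fun j => (⌊c / ‖u (φ j)‖⌋ : ℝ) * ‖u (φ j)‖ - c) atTop (𝓝 0) :=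
            squeeze_zero_norm hdist hu_tendsto
          have h4 := h3.add_const c
          simpa using h4
        have hwlim : Tendsto (fun j => ((w (φ j) : ↥U) : Fin k → ℝ)) atTop
            (𝓝 (w₀ : Fin k → ℝ)) :=
          (continuous_subtype_val.tendsto w₀).comp hlim
        have hfull : Tendsto (fun j => ((⌊c / ‖u (φ j)‖⌋ • u (φ j) : ↥U) : Fin k → ℝ)) atTop
            (𝓝 (c • (w₀ : Fin k → ℝ))) := by
          rw [show (fun j => ((⌊c / ‖u (φ j)‖⌋ • u (φ j) : ↥U) : Fin k → ℝ))
              = fun j => ((⌊c / ‖u (φ j)‖⌋ : ℝ) * ‖u (φ j)‖) • ((w (φ j) : ↥U) : Fin k → ℝ) from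
            funext heq]
          exact hcoef.smul hwlim
        exact hGc.mem_of_tendsto hfull (Filter.Eventually.of_forall hterm)
      have hz : (w₀ : Fin k → ℝ) = 0 := by
        have hdisj := hUV.disjoint
        have hmem : (w₀ : Fin k → ℝ) ∈ V ⊓ U := ⟨hw₀V, w₀.2⟩
        rwa [hdisj.eq_bot, Submodule.mem_bot] at hmem
      have hz' : w₀ = 0 := Subtype.ext hz
      rw [hz'] at hw₀1
      simp at hw₀1
    -- DiscreteTopology L
    have hdisc : DiscreteTopology ↥L := by
      obtain ⟨ε, hε, hsep⟩ := hsep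
      rw [discreteTopology_iff_isOpen_singleton_zero, Metric.isOpen_singleton_iff]
      refine ⟨ε, hε, fun y hy => ?_⟩
      have hn : ‖(y : ↥U)‖ < ε := by
        simpa [dist_eq_norm] using hy
      exact Subtype.ext (hsep _ y.2 hn)
    -- IsZLattice
    have hspan : span ℝ (L : Set ↥U) = ⊤ := by
      have hsurj : LinearMap.range p = ⊤ := by
        rw [LinearMap.range_eq_top]
        intro v
        exact ⟨(v : Fin k → ℝ), by rw [hp]; exact Submodule.linearProjOfIsCompl_apply_left hUV' v⟩
      have hbil : ∀ i : Fin k, (Pi.basisFun ℝ (Fin k)) i ∈ S t := by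
        intro i
        refine ⟨0, Pi.single i 1, ?_⟩
        funext j
        simp [Pi.basisFun_apply, Pi.single_apply]
      have hsub : Set.range (fun i => p ((Pi.basisFun ℝ (Fin k)) i)) ⊆ (L : Set ↥U) := by
        rintro _ ⟨i, rfl⟩
        exact hpG _ (hSG _ (hbil i))
      have h1 : span ℝ (Set.range (fun i => p ((Pi.basisFun ℝ (Fin k)) i))) = ⊤ := by
        rw [show (fun i => p ((Pi.basisFun ℝ (Fin k)) i)) = p ∘ (Pi.basisFun ℝ (Fin k)) from rfl,
          Set.range_comp, ← Submodule.map_span, Module.Basis.span_eq, Submodule.map_top, hsurj]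
      rw [eq_top_iff, ← h1]
      exact span_mono hsub
    have : IsZLattice ℝ L := ⟨hspan⟩
    have hfree : Module.Free ℤ ↥L := ZLattice.module_free ℝ L
    have hfin : Module.Finite ℤ ↥L := ZLattice.module_finite ℝ L
    -- nontriviality of U
    have hUne : U ≠ ⊥ := by
      intro hbot
      apply hV
      have htop := hUV.sup_eq_top
      rwa [hbot, sup_bot_eq] at htop
    have hUnontriv : Nontrivial ↥U := Submodule.nontrivial_iff_ne_bot.2 hUne
    have hrank : Module.finrank ℤ ↥L = Module.finrank ℝ ↥U := ZLattice.rank ℝ L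
    have hne : Nonempty (Module.Free.ChooseBasisIndex ℤ ↥L) := by
      rw [← Fintype.card_pos_iff, ← Module.finrank_eq_card_chooseBasisIndex, hrank]
      exact Module.finrank_pos
    obtain ⟨i₀⟩ := hne
    set b₀ := Module.Free.chooseBasis ℤ ↥L with hb₀
    set b : Module.Basis _ ℝ ↥U := Module.Basis.ofZLatticeBasis ℝ L b₀ with hb
    set f : (Fin k → ℝ) →ₗ[ℝ] ℝ := (b.coord i₀) ∘ₗ p with hf
    -- integrality on S
    have hint : ∀ x ∈ S t, ∃ z : ℤ, f x = z := by
      intro x hx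
      have hpx : p x ∈ L := hpG _ (hSG _ hx)
      refine ⟨b₀.repr ⟨p x, hpx⟩ i₀, ?_⟩
      have hrepr := Module.Basis.ofZLatticeBasis_repr_apply ℝ L b₀ ⟨p x, hpx⟩ i₀
      rw [hf]
      simp only [LinearMap.coe_comp, Function.comp_apply, Module.Basis.coord_apply]
      rw [← hb] at hrepr
      exact hrepr
    obtain ⟨a, ha⟩ := hint t ⟨1, 0, by funext i; simp⟩
    have hintA : ∀ i : Fin k, ∃ z : ℤ, f ((Pi.basisFun ℝ (Fin k)) i) = z := by
      intro i
      apply hint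
      refine ⟨0, Pi.single i 1, ?_⟩
      funext j
      simp [Pi.basisFun_apply, Pi.single_apply]
    choose A hA using hintA
    -- linear relation
    have hrel : (a : ℝ) = ∑ i : Fin k, (A i : ℝ) * t i := by
      have hexp : t = ∑ i : Fin k, t i • (Pi.basisFun ℝ (Fin k)) i := by
        funext j
        rw [Finset.sum_apply]
        simp [Pi.basisFun_apply, Pi.single_apply]
      rw [← ha]
      conv_lhs => rw [hexp]
      rw [map_sum]
      refine Finset.sum_congr rfl fun i _ => ?_
      rw [map_smul, hA i, smul_eq_mul, mul_comm]
    -- contradiction with linear independence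
    have hzero : a = 0 ∧ ∀ i, A i = 0 := by
      set g : Fin (k+1) → ℚ := Fin.cons ((a : ℚ)) (fun i => -(A i : ℚ)) with hgdef
      have hli' := Fintype.linearIndependent_iff.1 hli g
      have hsum : ∑ j : Fin (k+1), g j • (Fin.cons 1 t : Fin (k+1) → ℝ) j = 0 := by
        simp only [hgdef]
        rw [Fin.sum_univ_succ]
        simp only [Fin.cons_zero, Fin.cons_succ, Rat.smul_def, Rat.cast_neg, Rat.cast_intCast,
          mul_one, neg_mul]
        rw [Finset.sum_neg_distrib, hrel, add_neg_cancel]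
      have hz := hli' hsum
      simp only [hgdef] at hz
      constructor
      · have h0 := hz 0
        simp only [Fin.cons_zero] at h0
        exact_mod_cast h0
      · intro i
        have h0 := hz i.succ
        simp only [Fin.cons_succ, neg_eq_zero] at h0
        exact_mod_cast h0
    -- but f is nonzero
    have hf0 : ∀ x, f x = 0 := by
      intro x
      have hexp : x = ∑ i : Fin k, x i • (Pi.basisFun ℝ (Fin k)) i := by
        funext j
        rw [Finset.sum_apply]
        simp [Pi.basisFun_apply, Pi.single_apply]
      rw [hexp, map_sum]
      refine Finset.sum_eq_zero fun i _ => ?_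
      rw [map_smul, hA i, hzero.2 i]
      simp
    have hfone : f ((b i₀ : ↥U) : Fin k → ℝ) = 1 := by
      rw [hf]
      simp only [LinearMap.coe_comp, Function.comp_apply]
      rw [hp, Submodule.linearProjOfIsCompl_apply_left]
      rw [Module.Basis.coord_apply, Module.Basis.repr_self]
      simp
    rw [hf0] at hfone
    exact zero_ne_one hfone
  -- conclude density
  intro x
  have hx : x ∈ V := hVtop ▸ Submodule.mem_top
  have hxG : x ∈ G := by simpa using (hVmem.1 hx) 1
  exact hxG

lemma close_height {r yi hi ε δ : ℝ} (hhi : hi = 2 * |yi - 1 / 2|)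
    (hr : |r - yi| < δ) (hδ : 4 * δ ≤ ε) : |2 * |r - 1 / 2| - hi| < ε := by
  have key : |(|r - 1/2| - |yi - 1/2|)| ≤ |r - yi| := by
    have := abs_abs_sub_abs_le_abs_sub (r - 1/2) (yi - 1/2)
    simpa using this
  have hδ' : 0 < δ := lt_of_le_of_lt (abs_nonneg _) hr
  rw [hhi, show 2 * |r - 1/2| - 2 * |yi - 1/2| = 2 * (|r - 1/2| - |yi - 1/2|) by ring,
    abs_mul, abs_two]
  nlinarith [abs_nonneg (|r - 1/2| - |yi - 1/2|)]

end HeightsApprox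

open HeightsApprox in
/-- If `1, t₁, …, t_k` are `ℚ`-linearly independent with `t_i ∈ (0,1)`, then for any
target heights `h_i ∈ (0,1)` and `ε > 0` there exist `n ≥ 1` and `φ` such that the
sawtooth heights `z(t_i) = 2|fract(n t_i + φ) - 1/2|` are `ε`-close to the `h_i`. -/
theorem heights_approx {k : ℕ} (t : Fin k → ℝ) (ht : ∀ i, t i ∈ Set.Ioo (0 : ℝ) 1)
    (hli : LinearIndependent ℚ (Fin.cons 1 t : Fin (k + 1) → ℝ))
    (h : Fin k → ℝ) (hh : ∀ i, h i ∈ Set.Ioo (0 : ℝ) 1) (ε : ℝ) (hε : 0 < ε) :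
    ∃ (n : ℕ) (φ : ℝ), 1 ≤ n ∧
      ∀ i, |2 * |Int.fract ((n : ℝ) * t i + φ) - 1 / 2| - h i| < ε := by
  rcases Nat.eq_zero_or_pos k with hk | hk
  · subst hk
    exact ⟨1, 0, le_refl 1, fun i => i.elim0⟩
  have hne : Nonempty (Fin k) := ⟨⟨0, hk⟩⟩
  -- target point
  set y : Fin k → ℝ := fun i => (1 - h i) / 2 with hy
  have hy0 : ∀ i, 0 < y i := fun i => by have := (hh i).2; simp only [hy]; linarith
  have hy1 : ∀ i, y i < 1/2 := fun i => by have := (hh i).1; simp only [hy]; linarith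
  have hhy : ∀ i, h i = 2 * |y i - 1/2| := by
    intro i
    have h1 : y i - 1/2 = -(h i)/2 := by simp only [hy]; ring
    rw [h1, abs_div, abs_neg, abs_two, abs_of_pos (hh i).1]
    ring
  -- choose δ
  set δ₀ : ℝ := Finset.univ.inf' Finset.univ_nonempty (fun i => min (y i) (1 - y i)) with hδ₀
  have hδ₀pos : 0 < δ₀ := by
    rw [hδ₀, Finset.lt_inf'_iff]
    intro i _
    refine lt_min (hy0 i) ?_
    have := hy1 i; linarith
  have hδ₀le : ∀ i, δ₀ ≤ y i ∧ δ₀ ≤ 1 - y i := by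
    intro i
    constructor
    · exact le_trans (Finset.inf'_le _ (Finset.mem_univ i)) (min_le_left _ _)
    · exact le_trans (Finset.inf'_le _ (Finset.mem_univ i)) (min_le_right _ _)
  set δ : ℝ := min (ε/4) δ₀ / 2 with hδdef
  have hδpos : 0 < δ := by
    rw [hδdef]
    have := lt_min (by linarith : (0:ℝ) < ε/4) hδ₀pos
    linarith
  have hδy : ∀ i, δ < y i := fun i => by
    have h1 : δ < δ₀ := by
      rw [hδdef]; have := min_le_right (ε/4) δ₀; linarith
    exact lt_of_lt_of_le h1 (hδ₀le i).1
  have hδy' : ∀ i, δ < 1 - y i := fun i => by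
    have h1 : δ < δ₀ := by
      rw [hδdef]; have := min_le_right (ε/4) δ₀; linarith
    exact lt_of_lt_of_le h1 (hδ₀le i).2
  have hδε : 4 * δ ≤ ε := by
    rw [hδdef]; have := min_le_left (ε/4) δ₀; linarith
  -- use density
  have hd := kron_dense t hli
  obtain ⟨z, hzb, hzS⟩ := Metric.dense_iff.1 hd y δ hδpos
  obtain ⟨n, m, rfl⟩ := hzS
  have hcoord : ∀ i, |(n : ℝ) * t i + m i - y i| < δ := by
    intro i
    have h1 : dist (fun i => (n:ℝ) * t i + m i) y < δ := Metric.mem_ball.1 hzb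
    have h2 := (dist_pi_lt_iff hδpos).1 h1 i
    rwa [Real.dist_eq] at h2
  have hrange : ∀ i, 0 < (n : ℝ) * t i + m i ∧ (n : ℝ) * t i + m i < 1 := by
    intro i
    have h1 := abs_lt.1 (hcoord i)
    constructor
    · have := hδy i; linarith [h1.1]
    · have := hδy' i; linarith [h1.2]
  have hn0 : n ≠ 0 := by
    rintro rfl
    obtain ⟨i⟩ := hne
    have h1 := abs_lt.1 (hcoord i)
    simp only [Int.cast_zero, zero_mul, zero_add] at h1
    have h2 : (0:ℝ) < (m i : ℝ) := by have := hδy i; linarith [h1.1]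
    have h3 : (m i : ℝ) < 1 := by have := hδy' i; linarith [h1.2]
    have h2' : 0 < m i := by exact_mod_cast h2
    have h3' : m i < 1 := by exact_mod_cast h3
    omega
  rcases lt_or_gt_of_ne hn0 with hneg | hpos
  · -- n < 0 : use -n
    refine ⟨(-n).toNat, 0, by omega, ?_⟩
    intro i
    have hcast : (((-n).toNat : ℕ) : ℝ) = -(n : ℝ) := by
      have : ((-n).toNat : ℤ) = -n := Int.toNat_of_nonneg (by omega)
      exact_mod_cast this
    set r : ℝ := (n : ℝ) * t i + m i with hr
    have hfr : Int.fract (((-n).toNat : ℝ) * t i + 0) = 1 - r := by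
      rw [add_zero, hcast]
      have h1 : -(n : ℝ) * t i = -r + (m i : ℤ) := by rw [hr]; push_cast; ring
      rw [h1, Int.fract_add_intCast, Int.fract_neg, Int.fract_eq_self.2 ⟨(hrange i).1.le, (hrange i).2⟩]
      · rw [Int.fract_eq_self.2 ⟨(hrange i).1.le, (hrange i).2⟩]
        exact (hrange i).1.ne'
    rw [hfr]
    have habs : |1 - r - 1/2| = |r - 1/2| := by
      rw [show (1 : ℝ) - r - 1/2 = -(r - 1/2) by ring, abs_neg]
    rw [habs]
    exact close_height (hhy i) (hcoord i) hδε
  · -- n > 0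
    refine ⟨n.toNat, 0, by omega, ?_⟩
    intro i
    have hcast : ((n.toNat : ℕ) : ℝ) = (n : ℝ) := by
      have : (n.toNat : ℤ) = n := Int.toNat_of_nonneg (by omega)
      exact_mod_cast this
    set r : ℝ := (n : ℝ) * t i + m i with hr
    have hfr : Int.fract ((n.toNat : ℝ) * t i + 0) = r := by
      rw [add_zero, hcast]
      have h1 : (n : ℝ) * t i = r + (-(m i) : ℤ) := by rw [hr]; push_cast; ring
      rw [h1, Int.fract_add_intCast, Int.fract_eq_self.2 ⟨(hrange i).1.le, (hrange i).2⟩]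
    rw [hfr]
    exact close_height (hhy i) (hcoord i) hδε
end

section
/- Let t₁, t₂, t₃, t₄ be reals with t₂ − t₁ = t₄ − t₃ and z(t) = 2·|frac(n·t + φ) − 1/2| for some n ∈ ℤ, φ ∈ ℝ. If z(t₁) = z(t₂) = z(t₃) = 1, then z(t₄) = 1. -/
/-- If `t₂ - t₁ = t₄ - t₃` and `z(t) = 2|fract(n t + φ) - 1/2|`, then
`z(t₁) = z(t₂) = z(t₃) = 1` implies `z(t₄) = 1`. -/
theorem height_one_forced (t₁ t₂ t₃ t₄ : ℝ) (h : t₂ - t₁ = t₄ - t₃)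
    (n : ℤ) (φ : ℝ) (z : ℝ → ℝ)
    (hz : ∀ t, z t = 2 * |Int.fract ((n : ℝ) * t + φ) - 1 / 2|)
    (h1 : z t₁ = 1) (h2 : z t₂ = 1) (h3 : z t₃ = 1) :
    z t₄ = 1 := by
  have key : ∀ t, z t = 1 ↔ Int.fract ((n : ℝ) * t + φ) = 0 := by
    intro t
    rw [hz t]
    have h0 := Int.fract_nonneg ((n : ℝ) * t + φ)
    have h1 := Int.fract_lt_one ((n : ℝ) * t + φ)
    constructor
    · intro he
      rcases abs_cases (Int.fract ((n : ℝ) * t + φ) - 1 / 2) with ⟨ha, _⟩ | ⟨ha, _⟩ <;>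
        rw [ha] at he <;> linarith
    · intro he
      rw [he, show (0:ℝ) - 1/2 = -(1/2) by ring, abs_neg,
        abs_of_nonneg (by norm_num : (0:ℝ) ≤ 1/2)]
      norm_num
  rw [key] at h1 h2 h3 ⊢
  rw [Int.fract_eq_iff] at h1 h2 h3 ⊢
  obtain ⟨_, _, k1, hk1⟩ := h1
  obtain ⟨_, _, k2, hk2⟩ := h2
  obtain ⟨_, _, k3, hk3⟩ := h3
  refine ⟨le_refl 0, by norm_num, k2 - k1 + k3, ?_⟩
  push_cast
  have ht : t₄ = t₂ - t₁ + t₃ := by linarith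
  subst ht
  have expand : (n : ℝ) * (t₂ - t₁ + t₃) = (n:ℝ)*t₂ - (n:ℝ)*t₁ + (n:ℝ)*t₃ := by ring
  linarith
end

section
/- Quasitoric braids of a fixed strand number k form a subgroup of the braid group B_k; in particular the inverse of a quasitoric braid is (equivalent to) a quasitoric braid, and the product of two quasitoric braids of types (k,n₁) and (k,n₂) is a quasitoric braid of type (k, n₁+n₂). -/
/-- The braid relations on `k` strands, with generators `σ₁, …, σ_{k-1}` indexed by
`Fin (k-1)`: `σᵢσⱼσᵢ = σⱼσᵢσⱼ` for `|i - j| = 1` and `σᵢσⱼ = σⱼσᵢ` for `|i - j| ≥ 2`. -/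
def braidRels (k : ℕ) : Set (FreeGroup (Fin (k - 1))) :=
  {r | (∃ i j : Fin (k - 1), (i : ℕ) + 1 = (j : ℕ) ∧
          r = FreeGroup.of i * FreeGroup.of j * FreeGroup.of i *
              (FreeGroup.of j * FreeGroup.of i * FreeGroup.of j)⁻¹) ∨
       (∃ i j : Fin (k - 1), (i : ℕ) + 2 ≤ (j : ℕ) ∧
          r = FreeGroup.of i * FreeGroup.of j * (FreeGroup.of j * FreeGroup.of i)⁻¹)}

/-- The braid group `B_k` on `k` strands. -/
def BraidGroup (k : ℕ) := PresentedGroup (braidRels k)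

noncomputable instance (k : ℕ) : Group (BraidGroup k) :=
  inferInstanceAs (Group (PresentedGroup (braidRels k)))

/-- The standard generator `σᵢ` of `B_k`. -/
def braidGen (k : ℕ) (i : Fin (k - 1)) : BraidGroup k := PresentedGroup.of i

/-- `β` is a quasitoric braid of type `(k, n)`: it is obtained from the toric braid
`τ_{k,n} = (σ₁⋯σ_{k-1})ⁿ` by replacing some letters `σᵢ` by `σᵢ⁻¹`. -/
def IsQuasitoric {k : ℕ} (n : ℕ) (β : BraidGroup k) : Prop :=
  ∃ e : Fin n → Fin (k - 1) → ℤ, (∀ r i, e r i = 1 ∨ e r i = -1) ∧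
    β = (List.ofFn fun r : Fin n =>
          (List.ofFn fun i : Fin (k - 1) => braidGen k i ^ e r i).prod).prod

/-! Concatenating rows shows that products of quasitoric braids are quasitoric, so the
quasitoric braids form the submonoid generated by the rows `σ₁^{±1} ⋯ σ_{k-1}^{±1}`, and it
suffices that the inverse of a row is a product of rows. That inverse is a descending word
`σ_{k-1}^{±1} ⋯ σ₁^{±1}`, built up one letter at a time: a new letter `σ_m^t` is pushed to the
right through the `m` rows of length `m` representing the shorter descending word. The braid
relation in the form `σ_{i+1}^t σ_i^x σ_{i+1}^{-t} = σ_i^{-t} σ_{i+1}^x σ_i^t` lets the tail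
`σ_j^t ⋯ σ_m^t` pass a row at the price of inserting `σ_{j-1}^{-t}` into it, the tail growing to
`σ_{j-1}^t ⋯ σ_m^t`; after the last row it is the full row `σ₁^t ⋯ σ_m^t`. -/

section Braid

variable {G : Type*} [Group G]

theorem Subgroup.closure_toSubmonoid_of_forall_inv_mem {S : Set G}
    (hS : ∀ x ∈ S, x⁻¹ ∈ Submonoid.closure S) :
    (Subgroup.closure S).toSubmonoid = Submonoid.closure S := by
  refine le_antisymm ?_ (Subgroup.le_closure_toSubmonoid S)
  rw [Subgroup.closure_toSubmonoid]
  exact Submonoid.closure_le.2 <| Set.union_subset Submonoid.subset_closure fun x hx => by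
    simpa using hS _ hx

theorem zpow_conj_zpow_of_braid {a b : G} (h : a * b * a = b * a * b) (t : ℤˣ) (x : ℤ) :
    b ^ (t : ℤ) * a ^ x * b ^ (-(t : ℤ)) = a ^ (-(t : ℤ)) * b ^ x * a ^ (t : ℤ) := by
  suffices hconj : b ^ (t : ℤ) * a * (b ^ (t : ℤ))⁻¹ = (a ^ (t : ℤ))⁻¹ * b * (a ^ (t : ℤ))⁻¹⁻¹ by
    rw [zpow_neg, zpow_neg, ← conj_zpow, hconj, conj_zpow, inv_inv]
  rcases Int.units_eq_one_or t with rfl | rfl <;>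
    simp only [Units.val_one, Units.val_neg, zpow_one, zpow_neg, inv_inv]
  · calc b * a * b⁻¹ = a⁻¹ * (a * b * a) * b⁻¹ := by group
      _ = a⁻¹ * b * a := by rw [h]; group
  · calc b⁻¹ * a * b = b⁻¹ * (a * b * a) * a⁻¹ := by group
      _ = a * b * a⁻¹ := by rw [h]; group

/-- Far commutation is required for all indices; `braidGenNat` pads the generators of `B_k`
with `1`. -/
structure IsBraidFamily (s : ℕ → G) (N : ℕ) : Prop where
  braid : ∀ i, i + 1 < N → s i * s (i + 1) * s i = s (i + 1) * s i * s (i + 1)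
  commute : ∀ i j, i + 2 ≤ j → Commute (s i) (s j)

def rowProd (s : ℕ → G) : ℕ → List ℤˣ → G
  | _, [] => 1
  | j, x :: l => s j ^ (x : ℤ) * rowProd s (j + 1) l

variable (s : ℕ → G)

@[simp]
theorem rowProd_nil (j : ℕ) : rowProd s j [] = 1 := rfl

@[simp]
theorem rowProd_cons (j : ℕ) (x : ℤˣ) (l : List ℤˣ) :
    rowProd s j (x :: l) = s j ^ (x : ℤ) * rowProd s (j + 1) l := rfl

theorem rowProd_append (j : ℕ) (l₁ l₂ : List ℤˣ) :
    rowProd s j (l₁ ++ l₂) = rowProd s j l₁ * rowProd s (j + l₁.length) l₂ := by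
  induction l₁ generalizing j with
  | nil => simp
  | cons x l₁ ih => simp [ih, mul_assoc, Nat.add_right_comm, Nat.add_assoc]

theorem rowProd_ofFn (j : ℕ) {n : ℕ} (v : Fin n → ℤˣ) :
    rowProd s j (List.ofFn v) = (List.ofFn fun i => s (j + i) ^ (v i : ℤ)).prod := by
  induction n generalizing j with
  | zero => simp
  | succ n ih => simp [List.ofFn_succ, ih, Nat.add_assoc, Nat.add_comm 1]

variable {s} {N : ℕ}

theorem commute_zpow_rowProd (hc : ∀ i j, i + 2 ≤ j → Commute (s i) (s j)) {i j : ℕ}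
    (h : i + 2 ≤ j) (x : ℤ) (l : List ℤˣ) : Commute (s i ^ x) (rowProd s j l) := by
  induction l generalizing j with
  | nil => exact Commute.one_right _
  | cons y l ih => exact ((hc i j h).zpow_zpow x y).mul_right (ih (by omega))

theorem commute_rowProd_rowProd (hc : ∀ i j, i + 2 ≤ j → Commute (s i) (s j)) {i j : ℕ}
    (l₁ l₂ : List ℤˣ) (h : i + l₁.length + 1 ≤ j) : Commute (rowProd s i l₁) (rowProd s j l₂) := by
  induction l₁ generalizing i with
  | nil => exact Commute.one_left _
  | cons x l₁ ih =>
    simp only [List.length_cons] at h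
    exact (commute_zpow_rowProd hc (by omega) x l₂).mul_left (ih (by omega))

theorem rowProd_replicate_mul_rowProd (hs : IsBraidFamily s N) (t : ℤˣ) (j : ℕ) (l : List ℤˣ)
    (h : j + l.length < N) :
    rowProd s (j + 1) (.replicate l.length t) * rowProd s j l
      = rowProd s j (-t :: l) * rowProd s j (.replicate (l.length + 1) t) := by
  induction l generalizing j with
  | nil => simp [zpow_neg]
  | cons x l ih =>
    simp only [List.length_cons] at h ⊢
    have hbraid := zpow_conj_zpow_of_braid (hs.braid j (by omega)) t x
    have hx := commute_zpow_rowProd hs.commute (le_refl (j + 2)) x (.replicate l.length t)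
    have ht := commute_zpow_rowProd hs.commute (le_refl (j + 2)) t l
    calc rowProd s (j + 1) (.replicate (l.length + 1) t) * rowProd s j (x :: l)
        = s (j + 1) ^ (t : ℤ) * (rowProd s (j + 2) (.replicate l.length t) * s j ^ (x : ℤ))
            * rowProd s (j + 1) l := by simp [List.replicate_succ, mul_assoc]
      _ = s (j + 1) ^ (t : ℤ) * s j ^ (x : ℤ)
            * (rowProd s (j + 2) (.replicate l.length t) * rowProd s (j + 1) l) := by
          rw [← hx.eq]; simp only [mul_assoc]
      _ = s (j + 1) ^ (t : ℤ) * s j ^ (x : ℤ) * s (j + 1) ^ (-(t : ℤ))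
            * (rowProd s (j + 2) l * rowProd s (j + 1) (.replicate (l.length + 1) t)) := by
          rw [ih (j + 1) (by omega)]; simp [mul_assoc]
      _ = s j ^ (-(t : ℤ)) * s (j + 1) ^ (x : ℤ) * (s j ^ (t : ℤ) * rowProd s (j + 2) l)
            * rowProd s (j + 1) (.replicate (l.length + 1) t) := by
          rw [hbraid]; simp only [mul_assoc]
      _ = rowProd s j (-t :: x :: l) * rowProd s j (.replicate (l.length + 1 + 1) t) := by
          rw [ht.eq]; simp [List.replicate_succ, mul_assoc]

theorem rowProd_replicate_mul_rowProd_append (hs : IsBraidFamily s N) (t : ℤˣ)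
    (l₁ l₂ : List ℤˣ) (h : l₁.length + l₂.length < N) :
    rowProd s (l₁.length + 1) (.replicate l₂.length t) * rowProd s 0 (l₁ ++ l₂)
      = rowProd s 0 (l₁ ++ -t :: l₂) * rowProd s l₁.length (.replicate (l₂.length + 1) t) := by
  have hc := commute_rowProd_rowProd hs.commute (i := 0) (j := l₁.length + 1) l₁
    (.replicate l₂.length t) (by simp)
  rw [rowProd_append, rowProd_append, zero_add, ← mul_assoc, ← hc.eq, mul_assoc,
    rowProd_replicate_mul_rowProd hs t _ _ h, mul_assoc]

theorem exists_rowProd_replicate_mul_prod (hs : IsBraidFamily s N) (t : ℤˣ) {m : ℕ}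
    (hm : m < N) (L : List (List ℤˣ)) (hL : ∀ l ∈ L, l.length = m) (hlen : L.length ≤ m) :
    ∃ L' : List (List ℤˣ), L'.length = L.length + 1 ∧ (∀ l ∈ L', l.length = m + 1) ∧
      rowProd s L.length (.replicate (m + 1 - L.length) t) * (L.map (rowProd s 0)).prod
        = (L'.map (rowProd s 0)).prod := by
  induction L with
  | nil => exact ⟨[.replicate (m + 1) t], rfl, by simp, by simp⟩
  | cons l L ih =>
    simp only [List.forall_mem_cons, List.length_cons] at hL hlen ⊢
    obtain ⟨hl, hL⟩ := hL
    obtain ⟨L', hL'len, hL'm, hL'eq⟩ := ih hL (by omega)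
    have hinsert := rowProd_replicate_mul_rowProd_append hs t (l.take L.length) (l.drop L.length)
      (by simp only [List.length_take, List.length_drop]; omega)
    simp only [List.take_append_drop, List.length_take, List.length_drop, hl,
      min_eq_left (by omega : L.length ≤ m)] at hinsert
    refine ⟨(l.take L.length ++ -t :: l.drop L.length) :: L', by simp [hL'len], ?_, ?_⟩
    · refine List.forall_mem_cons.2 ⟨?_, hL'm⟩
      simp only [List.length_append, List.length_cons, List.length_take, List.length_drop]
      omega
    · rw [List.map_cons, List.prod_cons, ← mul_assoc, show m + 1 - (L.length + 1) = m - L.length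
        by omega, hinsert, mul_assoc, show m - L.length + 1 = m + 1 - L.length by omega, hL'eq,
        List.map_cons, List.prod_cons]

theorem exists_inv_rowProd_eq_prod (hs : IsBraidFamily s N) (l : List ℤˣ) (hl : l.length ≤ N) :
    ∃ L : List (List ℤˣ), L.length = l.length ∧ (∀ l' ∈ L, l'.length = l.length) ∧
      (rowProd s 0 l)⁻¹ = (L.map (rowProd s 0)).prod := by
  induction l using List.reverseRecOn with
  | nil => exact ⟨[], rfl, by simp, by simp⟩
  | append_singleton l x ih =>
    simp only [List.length_append, List.length_singleton] at hl ⊢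
    obtain ⟨L, hLlen, hLl, hLeq⟩ := ih (by omega)
    obtain ⟨L', hL'len, hL'l, hL'eq⟩ :=
      exists_rowProd_replicate_mul_prod hs (-x) (by omega) L hLl hLlen.le
    refine ⟨L', by rw [hL'len, hLlen], hL'l, ?_⟩
    rw [← hL'eq, hLlen, rowProd_append, mul_inv_rev, hLeq, Nat.add_sub_cancel_left]
    simp [zpow_neg]

end Braid

noncomputable def braidGenNat (k i : ℕ) : BraidGroup k :=
  if h : i < k - 1 then braidGen k ⟨i, h⟩ else 1

theorem braidGenNat_val {k : ℕ} (i : Fin (k - 1)) : braidGenNat k i = braidGen k i :=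
  dif_pos i.isLt

theorem braidGen_braid {k : ℕ} (i j : Fin (k - 1)) (h : (i : ℕ) + 1 = j) :
    braidGen k i * braidGen k j * braidGen k i = braidGen k j * braidGen k i * braidGen k j :=
  PresentedGroup.mk_eq_mk_of_mul_inv_mem (Or.inl ⟨i, j, h, rfl⟩)

theorem braidGen_commute {k : ℕ} (i j : Fin (k - 1)) (h : (i : ℕ) + 2 ≤ j) :
    Commute (braidGen k i) (braidGen k j) :=
  PresentedGroup.mk_eq_mk_of_mul_inv_mem (Or.inr ⟨i, j, h, rfl⟩)

theorem isBraidFamily_braidGenNat (k : ℕ) : IsBraidFamily (braidGenNat k) (k - 1) where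
  braid i h := by
    simpa [braidGenNat, h, show i < k - 1 by omega]
      using braidGen_braid ⟨i, by omega⟩ ⟨i + 1, h⟩ rfl
  commute i j h := by
    by_cases hj : j < k - 1
    · simpa [braidGenNat, hj, show i < k - 1 by omega]
        using braidGen_commute ⟨i, by omega⟩ ⟨j, hj⟩ h
    · simp [braidGenNat, hj]

theorem isQuasitoric_zero_one (k : ℕ) : IsQuasitoric (k := k) 0 1 :=
  ⟨finZeroElim, finZeroElim, by simp⟩

theorem IsQuasitoric.mul {k n₁ n₂ : ℕ} {β₁ β₂ : BraidGroup k} (h₁ : IsQuasitoric n₁ β₁)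
    (h₂ : IsQuasitoric n₂ β₂) : IsQuasitoric (n₁ + n₂) (β₁ * β₂) := by
  obtain ⟨e₁, hs₁, rfl⟩ := h₁
  obtain ⟨e₂, hs₂, rfl⟩ := h₂
  refine ⟨Fin.append e₁ e₂, fun r => ?_, by simp [List.ofFn_add]⟩
  refine Fin.addCases (fun r => ?_) (fun r => ?_) r <;> simp [hs₁, hs₂]

theorem isQuasitoric_one_iff {k : ℕ} {ρ : BraidGroup k} :
    IsQuasitoric 1 ρ ↔ ∃ l : List ℤˣ, l.length = k - 1 ∧ ρ = rowProd (braidGenNat k) 0 l := by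
  constructor
  · rintro ⟨e, hs, rfl⟩
    refine ⟨List.ofFn fun i => (Int.isUnit_iff.2 (hs 0 i)).unit, by simp, ?_⟩
    simp [rowProd_ofFn, braidGenNat_val]
  · rintro ⟨l, hl, rfl⟩
    obtain ⟨v, rfl⟩ : ∃ v : Fin (k - 1) → ℤˣ, List.ofFn v = l :=
      ⟨fun i => l[i.val], List.ext_getElem (by simp [hl]) (by simp)⟩
    exact ⟨fun _ i => v i, fun _ i => Int.isUnit_iff.1 (v i).isUnit, by
      simp [rowProd_ofFn, braidGenNat_val]⟩

theorem inv_mem_closure_of_isQuasitoric_one {k : ℕ} {ρ : BraidGroup k} (h : IsQuasitoric 1 ρ) :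
    ρ⁻¹ ∈ Submonoid.closure {β | IsQuasitoric 1 β} := by
  obtain ⟨l, hl, rfl⟩ := isQuasitoric_one_iff.1 h
  obtain ⟨L, -, hL, heq⟩ := exists_inv_rowProd_eq_prod (isBraidFamily_braidGenNat k) l hl.le
  rw [heq]
  refine Submonoid.list_prod_mem _ fun ρ hρ => Submonoid.subset_closure ?_
  obtain ⟨l', hl', rfl⟩ := List.mem_map.1 hρ
  exact isQuasitoric_one_iff.2 ⟨l', (hL l' hl').trans hl, rfl⟩

theorem mem_closure_isQuasitoric_one_iff {k : ℕ} {β : BraidGroup k} :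
    β ∈ Submonoid.closure {β | IsQuasitoric 1 β} ↔ ∃ n, IsQuasitoric n β := by
  constructor
  · intro h
    induction h using Submonoid.closure_induction with
    | mem β hβ => exact ⟨1, hβ⟩
    | one => exact ⟨0, isQuasitoric_zero_one k⟩
    | mul β γ _ _ hβ hγ =>
      obtain ⟨n, hn⟩ := hβ
      obtain ⟨m, hm⟩ := hγ
      exact ⟨n + m, hn.mul hm⟩
  · rintro ⟨n, e, hs, rfl⟩
    refine Submonoid.list_prod_mem _ fun ρ hρ => Submonoid.subset_closure ?_
    obtain ⟨r, rfl⟩ := List.mem_ofFn.1 hρ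
    exact ⟨fun _ => e r, fun _ => hs r, by simp⟩

noncomputable def quasitoricSubgroup (k : ℕ) : Subgroup (BraidGroup k) :=
  Subgroup.closure {β | IsQuasitoric 1 β}

theorem mem_quasitoricSubgroup_iff {k : ℕ} {β : BraidGroup k} :
    β ∈ quasitoricSubgroup k ↔ ∃ n, IsQuasitoric n β := by
  rw [← mem_closure_isQuasitoric_one_iff, ← Subgroup.mem_toSubmonoid, quasitoricSubgroup,
    Subgroup.closure_toSubmonoid_of_forall_inv_mem (S := {β | IsQuasitoric 1 β})
      fun _ => inv_mem_closure_of_isQuasitoric_one]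

/-- Quasitoric braids on `k` strands form a subgroup of `B_k`: the product of
quasitoric braids of types `(k,n₁)` and `(k,n₂)` is quasitoric of type `(k,n₁+n₂)`,
the inverse of a quasitoric braid is quasitoric, and the set of quasitoric braids
is (the carrier of) a subgroup. -/
theorem quasitoric_subgroup (k : ℕ) :
    (∀ (n₁ n₂ : ℕ) (β₁ β₂ : BraidGroup k), IsQuasitoric n₁ β₁ → IsQuasitoric n₂ β₂ →
        IsQuasitoric (n₁ + n₂) (β₁ * β₂)) ∧
    (∀ (n : ℕ) (β : BraidGroup k), IsQuasitoric n β → ∃ n', IsQuasitoric n' β⁻¹) ∧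
    (∃ S : Subgroup (BraidGroup k), ∀ β, β ∈ S ↔ ∃ n, IsQuasitoric n β) :=
  ⟨fun _ _ _ _ => IsQuasitoric.mul,
    fun n _ h => mem_quasitoricSubgroup_iff.1 (inv_mem (mem_quasitoricSubgroup_iff.2 ⟨n, h⟩)),
    ⟨quasitoricSubgroup k, fun _ => mem_quasitoricSubgroup_iff⟩⟩
end
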